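/- Let C_k be a cycle of order k, where k is even and k ≥ 4. Then af(C_k^{k/2}) = k(k − 2)/4; moreover for every m ≥ k/2, C_k^m is the complete graph K_k and af(C_k^m) = k(k − 2)/4. -/

import Mathlib

open SimpleGraph

/-- The `m`-th power of a graph `G`: two vertices are adjacent iff their
distance in `G` is at least 1 and at most `m`. -/
def SimpleGraph.power {V : Type*} (G : SimpleGraph V) (m : ℕ) : SimpleGraph V where
  Adj x y := 1 ≤ G.dist x y ∧ G.dist x y ≤ m
  symm := ⟨by intro x y h; rwa [SimpleGraph.dist_comm]⟩
  loopless := ⟨by intro x h; simp [SimpleGraph.dist_self] at h⟩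

/-- A graph has a unique perfect matching. -/
def HasUniquePerfectMatching {V : Type*} (G : SimpleGraph V) : Prop :=
  ∃! M : G.Subgraph, M.IsPerfectMatching

open Classical in
/-- The anti-forcing number of a graph `G`: the smallest cardinality of a set `S`
of edges of `G` such that `G - S` has a unique perfect matching; if no such set
exists, it is defined as the number of edges of `G`. -/
noncomputable def antiForcing {V : Type*} (G : SimpleGraph V) : ℕ :=
  if (∃ S : Set (Sym2 V), S ⊆ G.edgeSet ∧ HasUniquePerfectMatching (G.deleteEdges S))
  then sInf {n : ℕ | ∃ S : Set (Sym2 V), S ⊆ G.edgeSet ∧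
    HasUniquePerfectMatching (G.deleteEdges S) ∧ S.ncard = n}
  else G.edgeSet.ncard

/-!
A perfect matching is a fixed-point-free involution `p` with `v ~ p v` for every `v`. If `x ~ y`,
`y ≠ p x` and `p x ~ p y`, switching the alternating cycle `x y (p y) (p x)` gives a second one; so
when the perfect matching is unique, at most one of the ordered pairs `(x, y)` and `(p x, p y)` with
`y ∉ {x, p x}` is an edge, and a graph on `2n` vertices has at most `n²` edges. The graph on
`Fin (2n)` joining `x ≠ y` whenever `min x y` is even attains this with the unique perfect matching
`{2j, 2j + 1}`, so `af(K_{2n}) = C(2n, 2) - n² = n(n - 1)`. Any two vertices of `C_k` are at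
distance at most `k / 2`, so `C_k^m = K_k` for `m ≥ k / 2`.
-/

open Finset Function

theorem Finset.card_filter_univ_prod {α : Type*} [Fintype α] (P : α × α → Prop)
    [DecidablePred P] : #{e | P e} = ∑ a, #{b | P (a, b)} := by
  simp only [card_filter, Fintype.sum_prod_type]

theorem Finset.card_filter_ne_and_ne_apply_add {α : Type*} [Fintype α] [DecidableEq α]
    {p : α → α} (hp : ∀ a, p a ≠ a) :
    #{e : α × α | e.2 ≠ e.1 ∧ e.2 ≠ p e.1} + 2 * Fintype.card α = Fintype.card α ^ 2 := by
  have hrow : ∀ a, #{b | b ≠ a ∧ b ≠ p a} + 2 = Fintype.card α := fun a => by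
    have : ({b | b ≠ a ∧ b ≠ p a} : Finset α) = univ \ {a, p a} := by ext; simp
    have hpair := card_le_univ {a, p a}
    rw [card_pair (hp a).symm] at hpair
    rw [this, card_univ_sdiff, card_pair (hp a).symm]
    omega
  calc #{e : α × α | e.2 ≠ e.1 ∧ e.2 ≠ p e.1} + 2 * Fintype.card α
      = ∑ a, (#{b | b ≠ a ∧ b ≠ p a} + 2) := by
        rw [card_filter_univ_prod, sum_add_distrib]; simp [mul_comm]
    _ = Fintype.card α ^ 2 := by simp only [hrow, sum_const, card_univ, smul_eq_mul, sq]

namespace SimpleGraph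

variable {V : Type*} {G : SimpleGraph V}

def Subgraph.ofInvolutive (p : V → V) (hp : Involutive p) (hadj : ∀ v, G.Adj v (p v)) :
    G.Subgraph where
  verts := Set.univ
  Adj v w := w = p v
  adj_sub := by rintro v w rfl; exact hadj v
  edge_vert _ := trivial
  symm := ⟨fun v w (h : w = p v) => show v = p w by rw [h, hp]⟩

theorem Subgraph.isPerfectMatching_ofInvolutive {p : V → V} (hp : Involutive p)
    (hadj : ∀ v, G.Adj v (p v)) : (Subgraph.ofInvolutive p hp hadj).IsPerfectMatching :=
  Subgraph.isPerfectMatching_iff.2 fun v => ⟨p v, rfl, fun _ h => h⟩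

@[simp]
theorem Subgraph.ofInvolutive_adj {p : V → V} (hp : Involutive p)
    (hadj : ∀ v, G.Adj v (p v)) {v w : V} : (Subgraph.ofInvolutive p hp hadj).Adj v w ↔ w = p v :=
  Iff.rfl

theorem Subgraph.IsPerfectMatching.exists_eq_ofInvolutive {M : G.Subgraph}
    (hM : M.IsPerfectMatching) :
    ∃ p hp hadj, M = Subgraph.ofInvolutive p hp hadj := by
  choose p hp using Subgraph.isPerfectMatching_iff.1 hM
  have hMp : ∀ v w, M.Adj v w ↔ w = p v := fun v w => ⟨(hp v).2 w, fun h => h ▸ (hp v).1⟩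
  refine ⟨p, fun v => ((hMp _ _).1 (hp v).1.symm).symm, fun v => (hp v).1.adj_sub, ?_⟩
  ext v w
  · simp [hM.2.verts_eq_univ, Subgraph.ofInvolutive]
  · exact hMp v w

theorem not_adj_apply_of_forall_involutive_eq {p : V → V} (hp : Involutive p)
    (hadj : ∀ v, G.Adj v (p v))
    (huniq : ∀ q : V → V, Involutive q ∧ (∀ v, G.Adj v (q v)) → q = p)
    {x y : V} (hxy : G.Adj x y) (hy : y ≠ p x) : ¬G.Adj (p x) (p y) := by
  classical
  intro htwin
  -- `q` is `p` with the alternating cycle `x y (p y) (p x)` switched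
  set q : V → V := fun v => Equiv.swap (p x) y (p (Equiv.swap (p x) y v))
  have hq : Involutive q := fun v => by simp only [q, Equiv.swap_apply_self, hp _]
  have hpx : p x ≠ x := (hadj x).ne'
  have hpy : p y ≠ y := (hadj y).ne'
  have hqadj : ∀ v, G.Adj v (q v) := by
    intro v
    simp only [q, Equiv.swap_apply_def]
    split_ifs <;> grind [hp.injective.eq_iff, Involutive, SimpleGraph.Adj.symm]
  have hqx : q x = y := by
    simp only [q, Equiv.swap_apply_def]
    grind [hp.injective.eq_iff, Involutive, SimpleGraph.Adj.ne]
  exact hy (hqx ▸ congrFun (huniq q ⟨hq, hqadj⟩) x)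

theorem two_mul_card_edgeFinset_eq_card_add [Fintype V] [DecidableEq V] [DecidableRel G.Adj]
    {p : V → V} (hadj : ∀ v, G.Adj v (p v)) :
    2 * #G.edgeFinset = Fintype.card V + #{e : V × V | G.Adj e.1 e.2 ∧ e.2 ≠ p e.1} := by
  have hdeg : ∀ v, #{w | G.Adj v w} = 1 + #{w | G.Adj v w ∧ w ≠ p v} := fun v => by
    have : ({w | G.Adj v w} : Finset V) = insert (p v) ({w | G.Adj v w ∧ w ≠ p v} : Finset V) := by
      ext w; by_cases hw : w = p v <;> simp [hw, hadj]
    rw [this, card_insert_of_notMem (by simp), add_comm]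
  rw [two_mul_card_edgeFinset]
  calc #{e : V × V | G.Adj e.1 e.2} = ∑ v, (1 + #{w | G.Adj v w ∧ w ≠ p v}) := by
        rw [card_filter_univ_prod]; exact sum_congr rfl fun v _ => hdeg v
    _ = Fintype.card V + #{e : V × V | G.Adj e.1 e.2 ∧ e.2 ≠ p e.1} := by
        rw [sum_add_distrib, card_filter_univ_prod]; simp

theorem two_mul_ncard_edgeSet_top_add_card [Fintype V] :
    2 * (⊤ : SimpleGraph V).edgeSet.ncard + Fintype.card V = Fintype.card V ^ 2 := by
  classical
  rw [← coe_edgeFinset, Set.ncard_coe_finset, card_edgeFinset_top_eq_card_choose_two,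
    Nat.choose_two_right, Nat.mul_div_cancel' (Nat.even_mul_pred_self _).two_dvd]
  rcases Fintype.card V with _ | c
  · simp
  · simp only [Nat.add_sub_cancel]
    ring

def evenMinGraph (k : ℕ) : SimpleGraph (Fin k) where
  Adj x y := x ≠ y ∧ min x.val y.val % 2 = 0
  symm := ⟨fun x y h => ⟨h.1.symm, by rw [min_comm]; exact h.2⟩⟩
  loopless := ⟨fun _ h => h.1 rfl⟩

theorem evenMinGraph_adj {k : ℕ} {x y : Fin k} :
    (evenMinGraph k).Adj x y ↔ x ≠ y ∧ min x.val y.val % 2 = 0 :=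
  Iff.rfl

theorem le_ncard_edgeSet_evenMinGraph (n : ℕ) :
    n * n ≤ (evenMinGraph (2 * n)).edgeSet.ncard := by
  let f : Fin n × Fin n → Sym2 (Fin (2 * n)) := fun e =>
    if e.1 ≤ e.2 then s(⟨2 * e.1, by omega⟩, ⟨2 * e.2 + 1, by omega⟩)
    else s(⟨2 * e.2, by omega⟩, ⟨2 * e.1, by omega⟩)
  have hmem : ∀ e ∈ (Set.univ : Set (Fin n × Fin n)), f e ∈ (evenMinGraph (2 * n)).edgeSet := by
    rintro ⟨i, j⟩ -
    simp only [f]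
    split_ifs with h <;>
      simp only [mem_edgeSet, evenMinGraph_adj, ne_eq, Fin.ext_iff, Fin.le_def] at h ⊢ <;> omega
  have hinj : Set.InjOn f Set.univ := by
    rintro ⟨i, j⟩ - ⟨i', j'⟩ -
    simp only [f]
    split_ifs <;> simp only [Sym2.eq_iff, Fin.ext_iff, Prod.ext_iff, Fin.le_def] at * <;> omega
  simpa [Set.ncard_univ] using Set.ncard_le_ncard_of_injOn f hmem hinj (Set.toFinite _)

theorem power_eq_top_of_forall_dist_le (hG : G.Preconnected) {m : ℕ}
    (h : ∀ u v, G.dist u v ≤ m) : G.power m = ⊤ := by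
  ext u v
  simp only [top_adj]
  refine ⟨fun huv => ?_, fun huv => ⟨(hG u v).pos_dist_of_ne huv, h u v⟩⟩
  rintro rfl
  simpa using huv.1

open Fin.NatCast in
theorem cycleGraph_dist_add_natCast_le (n : ℕ) (x : Fin (n + 1)) (d : ℕ) :
    (cycleGraph (n + 1)).dist x (x + (d : Fin (n + 1))) ≤ d := by
  induction d with
  | zero => simp
  | succ d ih =>
    have hstep : (cycleGraph (n + 1)).dist (x + (d : Fin (n + 1))) (x + d + 1) ≤ 1 := by
      rcases n with _ | n
      · simp
      · exact (dist_eq_one_iff_adj.2 (by simp [cycleGraph_adj])).le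
    rw [Nat.cast_succ, ← add_assoc]
    exact ((cycleGraph_preconnected (x + (d : Fin (n + 1))) _).dist_triangle_right x).trans
      (by omega)

open Fin.NatCast in
theorem cycleGraph_dist_le_half {k : ℕ} (x y : Fin k) :
    (cycleGraph k).dist x y ≤ k / 2 := by
  rcases k with _ | n
  · exact x.elim0
  have hj := (y - x).isLt
  have hy : y = x + (((y - x).val : ℕ) : Fin (n + 1)) := by simp
  by_cases hhalf : (y - x).val ≤ (n + 1) / 2
  · rw [hy]
    exact (cycleGraph_dist_add_natCast_le n x _).trans hhalf
  · have hx : x = y + (((x - y).val : ℕ) : Fin (n + 1)) := by simp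
    have hyx : y - x ≠ 0 := fun h => hhalf (by simp [h])
    have hxy : (x - y).val = n + 1 - (y - x).val := by rw [← neg_sub, Fin.val_neg, if_neg hyx]
    rw [dist_comm, hx]
    exact (cycleGraph_dist_add_natCast_le n y _).trans (by omega)

theorem cycleGraph_power_eq_top {k m : ℕ} (hm : k / 2 ≤ m) :
    (cycleGraph k).power m = ⊤ :=
  power_eq_top_of_forall_dist_le cycleGraph_preconnected fun x y =>
    (cycleGraph_dist_le_half x y).trans hm

end SimpleGraph

theorem hasUniquePerfectMatching_iff_existsUnique_involutive {V : Type*} {G : SimpleGraph V} :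
    HasUniquePerfectMatching G ↔ ∃! p : V → V, Involutive p ∧ ∀ v, G.Adj v (p v) := by
  constructor
  · rintro ⟨M, hM, huniq⟩
    obtain ⟨p, hp, hadj, rfl⟩ := hM.exists_eq_ofInvolutive
    refine ⟨p, ⟨hp, hadj⟩, fun q ⟨hq, hqadj⟩ => funext fun v => ?_⟩
    have hqp := huniq _ (Subgraph.isPerfectMatching_ofInvolutive hq hqadj)
    have hv : (Subgraph.ofInvolutive q hq hqadj).Adj v (q v) := rfl
    rwa [hqp, Subgraph.ofInvolutive_adj] at hv
  · rintro ⟨p, ⟨hp, hadj⟩, huniq⟩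
    refine ⟨_, Subgraph.isPerfectMatching_ofInvolutive hp hadj, fun N hN => ?_⟩
    obtain ⟨q, hq, hqadj, rfl⟩ := hN.exists_eq_ofInvolutive
    obtain rfl := huniq q ⟨hq, hqadj⟩
    rfl

theorem HasUniquePerfectMatching.four_mul_ncard_edgeSet_le {V : Type*} [Fintype V]
    {G : SimpleGraph V} (h : HasUniquePerfectMatching G) :
    4 * G.edgeSet.ncard ≤ Fintype.card V ^ 2 := by
  classical
  obtain ⟨p, ⟨hp, hadj⟩, huniq⟩ := hasUniquePerfectMatching_iff_existsUnique_involutive.1 h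
  have hE := two_mul_card_edgeFinset_eq_card_add hadj
  have hX := card_filter_ne_and_ne_apply_add fun v => (hadj v).ne'
  set A : Finset (V × V) := {e | G.Adj e.1 e.2 ∧ e.2 ≠ p e.1}
  set X : Finset (V × V) := {e | e.2 ≠ e.1 ∧ e.2 ≠ p e.1}
  have hdisj : Disjoint A (A.image (Prod.map p p)) := by
    refine disjoint_left.2 fun e he he' => ?_
    obtain ⟨⟨a, b⟩, hab, rfl⟩ := mem_image.1 he'
    simp only [A, mem_filter, mem_univ, true_and, Prod.map] at hab he
    exact not_adj_apply_of_forall_involutive_eq hp hadj huniq hab.1 hab.2 he.1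
  have hAX : A ∪ A.image (Prod.map p p) ⊆ X := by
    refine union_subset (fun e he => ?_) fun e he => ?_
    · simp only [A, X, mem_filter, mem_univ, true_and] at he ⊢
      exact ⟨he.1.ne', he.2⟩
    · obtain ⟨⟨a, b⟩, hab, rfl⟩ := mem_image.1 he
      simp only [A, X, mem_filter, mem_univ, true_and, Prod.map, hp.injective.ne_iff, hp a] at hab ⊢
      exact ⟨hab.1.ne', by rintro rfl; exact hab.2 (hp b).symm⟩
  have hA : 2 * #A ≤ #X :=
    calc 2 * #A = #(A ∪ A.image (Prod.map p p)) := by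
          rw [card_union_of_disjoint hdisj,
            card_image_of_injective A (hp.injective.prodMap hp.injective), two_mul]
      _ ≤ #X := card_le_card hAX
  rw [← coe_edgeFinset, Set.ncard_coe_finset]
  omega

theorem hasUniquePerfectMatching_evenMinGraph (n : ℕ) :
    HasUniquePerfectMatching (evenMinGraph (2 * n)) := by
  refine hasUniquePerfectMatching_iff_existsUnique_involutive.2
    ⟨fun v => ⟨if v.val % 2 = 0 then v.val + 1 else v.val - 1, by split_ifs <;> omega⟩,
      ⟨fun v => ?_, fun v => ?_⟩, fun q ⟨hq, hqadj⟩ => funext fun v => ?_⟩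
  · ext; simp only; split_ifs <;> omega
  · rw [evenMinGraph_adj, ne_eq, Fin.ext_iff]; simp only; split_ifs <;> omega
  -- `2j + 1` is adjacent only to even vertices `2i ≤ 2j`, and each `2i < 2j` is matched to `2i + 1`
  have hodd : ∀ j (hj : 2 * j + 1 < 2 * n), (q ⟨2 * j + 1, hj⟩).val = 2 * j := by
    intro j
    induction j using Nat.strong_induction_on with
    | _ j ih =>
      intro hj
      have hadj := hqadj ⟨2 * j + 1, hj⟩
      set w := q ⟨2 * j + 1, hj⟩
      rw [evenMinGraph_adj, ne_eq, Fin.ext_iff] at hadj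
      simp only at hadj
      by_contra hwj
      obtain ⟨i, hi⟩ : ∃ i, w.val = 2 * i := ⟨w.val / 2, by omega⟩
      have hprev : q ⟨2 * i + 1, by omega⟩ = w := Fin.ext (by rw [ih i (by omega)]; omega)
      have hqw : q w = ⟨2 * i + 1, by omega⟩ := by rw [← hprev, hq]
      have := congrArg Fin.val (hqw.symm.trans (hq _ : q w = ⟨2 * j + 1, hj⟩))
      simp only at this
      omega
  ext
  simp only
  split_ifs with hv
  · have hnext : q ⟨2 * (v.val / 2) + 1, by omega⟩ = v := Fin.ext (by rw [hodd]; omega)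
    rw [← hnext, hq]
    simp only
    omega
  · have := hodd (v.val / 2) (by omega)
    rw [show (⟨2 * (v.val / 2) + 1, _⟩ : Fin (2 * n)) = v from Fin.ext (by simp only; omega)]
      at this
    omega

theorem antiForcing_eq_of_exists_le_of_forall_le {V : Type*} {G : SimpleGraph V} {a : ℕ}
    (hS : ∃ S ⊆ G.edgeSet, HasUniquePerfectMatching (G.deleteEdges S) ∧ S.ncard ≤ a)
    (hmin : ∀ S ⊆ G.edgeSet, HasUniquePerfectMatching (G.deleteEdges S) → a ≤ S.ncard) :
    antiForcing G = a := by
  obtain ⟨S, hSE, hSU, hSa⟩ := hS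
  rw [antiForcing, if_pos ⟨S, hSE, hSU⟩]
  refine IsLeast.csInf_eq ⟨⟨S, hSE, hSU, le_antisymm hSa (hmin S hSE hSU)⟩, ?_⟩
  rintro _ ⟨T, hTE, hTU, rfl⟩
  exact hmin T hTE hTU

theorem antiForcing_top_fin_two_mul (n : ℕ) :
    antiForcing (⊤ : SimpleGraph (Fin (2 * n))) = n * (n - 1) := by
  have hTop := two_mul_ncard_edgeSet_top_add_card (V := Fin (2 * n))
  have hsq : n * (n - 1) + n = n * n := by
    rw [Nat.mul_sub_one]; have := Nat.le_mul_self n; omega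
  rw [Fintype.card_fin, show (2 * n) ^ 2 = 4 * (n * n) by ring] at hTop
  have hHE : (evenMinGraph (2 * n)).edgeSet ⊆ (⊤ : SimpleGraph (Fin (2 * n))).edgeSet :=
    edgeSet_mono le_top
  refine antiForcing_eq_of_exists_le_of_forall_le
    ⟨(⊤ : SimpleGraph (Fin (2 * n))).edgeSet \ (evenMinGraph (2 * n)).edgeSet,
      Set.sdiff_subset, ?_, ?_⟩
    fun S hSE hSU => ?_
  · rw [deleteEdges_sdiff_eq_of_le le_top]
    exact hasUniquePerfectMatching_evenMinGraph n
  · have := le_ncard_edgeSet_evenMinGraph n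
    rw [Set.ncard_sdiff hHE]
    omega
  · have := hSU.four_mul_ncard_edgeSet_le
    rw [edgeSet_deleteEdges, Set.ncard_sdiff hSE, Fintype.card_fin,
      show (2 * n) ^ 2 = 4 * (n * n) by ring] at this
    have := Set.ncard_le_ncard hSE
    omega

theorem antiForcing_cycleGraph_power_half_general (k : ℕ) (hk : Even k) :
    antiForcing ((cycleGraph k).power (k / 2)) = k * (k - 2) / 4 ∧
      ∀ m : ℕ, k / 2 ≤ m → (cycleGraph k).power m = ⊤ ∧
        antiForcing ((cycleGraph k).power m) = k * (k - 2) / 4 := by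
  obtain ⟨n, rfl⟩ := hk.two_dvd
  have hK : antiForcing (⊤ : SimpleGraph (Fin (2 * n))) = 2 * n * (2 * n - 2) / 4 := by
    rw [antiForcing_top_fin_two_mul, show 2 * n - 2 = 2 * (n - 1) by omega,
      show 2 * n * (2 * (n - 1)) = 4 * (n * (n - 1)) by ring, Nat.mul_div_cancel_left _ four_pos]
  refine ⟨by rw [cycleGraph_power_eq_top le_rfl, hK], fun m hm => ?_⟩
  rw [cycleGraph_power_eq_top hm]
  exact ⟨rfl, hK⟩

/-- For a cycle `C k` of even order `k ≥ 4`, `af(C_k^{k/2}) = k(k-2)/4`; moreover for every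
`m ≥ k/2`, `C_k^m` is the complete graph `K_k` and `af(C_k^m) = k(k-2)/4`. -/
theorem antiForcing_cycleGraph_power_half (k : ℕ) (hk : Even k) (h4 : 4 ≤ k) :
    antiForcing ((cycleGraph k).power (k / 2)) = k * (k - 2) / 4 ∧
      ∀ m : ℕ, k / 2 ≤ m → (cycleGraph k).power m = ⊤ ∧
        antiForcing ((cycleGraph k).power m) = k * (k - 2) / 4 :=
  antiForcing_cycleGraph_power_half_general k hk
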